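/- Let (X,d,μ) be complete, unbounded, Ahlfors Q-regular with Q > 1, supporting a suitable Poincaré inequality, with p > Q/2, and let (Ẋ, d̂_a, μ̂_a) be its sphericalization with dμ̂_a(x) = dμ(x)/(1+d(x,a))^{2p}. Then for all sufficiently small r > 0, μ̂_a(B̂(∞,r)) ≃ r^{2p-Q}, where B̂(∞,r) is the ball of radius r centered at ∞ in (Ẋ, d̂_a). -/

import Mathlib

open MeasureTheory Metric Set ENNReal Filter

/-- A (nonconstant, compact, rectifiable) curve with respect to a distance
function `D`, parameterized by arc length on `[0, len]`
(so that it is `1`-Lipschitz with respect to `D`). -/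
structure CurveD (Y : Type*) (D : Y → Y → ℝ) where
  toFun : ℝ → Y
  len : ℝ
  len_pos : 0 < len
  lip : ∀ s ∈ Set.Icc (0:ℝ) len, ∀ t ∈ Set.Icc (0:ℝ) len, D (toFun s) (toFun t) ≤ |s - t|

/-- The curve lies in the set `Ω`. -/
def CurveD.inSet {Y : Type*} {D : Y → Y → ℝ} (γ : CurveD Y D) (Ω : Set Y) : Prop :=
  ∀ t ∈ Set.Icc (0:ℝ) γ.len, γ.toFun t ∈ Ω

/-- Line integral `∫_γ ρ ds̃`, where the arc length element is `ds̃ = w ds`. -/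
noncomputable def lineInt {Y : Type*} {D : Y → Y → ℝ} (γ : CurveD Y D) (ρ w : Y → ℝ≥0∞) : ℝ≥0∞ :=
  ∫⁻ t in Set.Icc (0:ℝ) γ.len, ρ (γ.toFun t) * w (γ.toFun t)

/-- The `p`-modulus of a curve family `Γ`, with energy measure `μ` and arc
length weighted by `w`. -/
noncomputable def pMod {Y : Type*} [MeasurableSpace Y] {D : Y → Y → ℝ} (p : ℝ) (μ : Measure Y)
    (w : Y → ℝ≥0∞) (Γ : Set (CurveD Y D)) : ℝ≥0∞ :=
  ⨅ (ρ : Y → ℝ≥0∞) (_ : Measurable ρ) (_ : ∀ γ ∈ Γ, 1 ≤ lineInt γ ρ w), ∫⁻ y, ρ y ^ p ∂μ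

/-- The absolute value of an extended real, as an element of `[0,∞]`. -/
noncomputable def eAbs (x : EReal) : ℝ≥0∞ :=
  if max x (-x) = (⊤ : EReal) then ⊤ else ENNReal.ofReal (max x (-x)).toReal

/-- `g` is an upper gradient of `u : Ω → [-∞,∞]` (arc length weighted by `w`). -/
def IsUpperGradientOn {Y : Type*} (D : Y → Y → ℝ) (w : Y → ℝ≥0∞) (Ω : Set Y)
    (u : Y → EReal) (g : Y → ℝ≥0∞) : Prop :=
  ∀ γ : CurveD Y D, γ.inSet Ω →
    eAbs (u (γ.toFun γ.len) - u (γ.toFun 0)) ≤ lineInt γ g w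

/-- `g` is a `p`-weak upper gradient of `u` in `Ω`: the upper gradient
inequality holds along `p`-almost every curve. -/
def IsPWUGOn {Y : Type*} [MeasurableSpace Y] (D : Y → Y → ℝ) (p : ℝ) (μ : Measure Y)
    (w : Y → ℝ≥0∞) (Ω : Set Y) (u : Y → EReal) (g : Y → ℝ≥0∞) : Prop :=
  ∃ Γ₀ : Set (CurveD Y D), pMod p μ w Γ₀ = 0 ∧
    ∀ γ : CurveD Y D, γ.inSet Ω → γ ∉ Γ₀ →
      eAbs (u (γ.toFun γ.len) - u (γ.toFun 0)) ≤ lineInt γ g w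

/-- `g` has locally finite `p`-energy in `Ω`. -/
def IsLocLp {Y : Type*} [MetricSpace Y] [MeasurableSpace Y] (p : ℝ) (μ : Measure Y)
    (Ω : Set Y) (g : Y → ℝ≥0∞) : Prop :=
  ∀ x ∈ Ω, ∃ r > (0:ℝ), ∫⁻ y in Ω ∩ Metric.ball x r, g y ^ p ∂μ < ⊤

/-- `g` is the minimal `p`-weak upper gradient of `u` in `Ω`. -/
def IsMinimalPWUGOn {Y : Type*} [MetricSpace Y] [MeasurableSpace Y] (D : Y → Y → ℝ) (p : ℝ)
    (μ : Measure Y) (w : Y → ℝ≥0∞) (Ω : Set Y) (u : Y → EReal) (g : Y → ℝ≥0∞) : Prop :=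
  IsPWUGOn D p μ w Ω u g ∧ IsLocLp p μ Ω g ∧
    ∀ h : Y → ℝ≥0∞, IsPWUGOn D p μ w Ω u h → IsLocLp p μ Ω h →
      ∀ᵐ x ∂(μ.restrict Ω), g x ≤ h x

/-- The `p`-th power of the Newtonian norm of `u` on `Ω`. -/
noncomputable def NpNormP {Y : Type*} [MeasurableSpace Y] (D : Y → Y → ℝ) (p : ℝ)
    (μ : Measure Y) (w : Y → ℝ≥0∞) (Ω : Set Y) (u : Y → EReal) : ℝ≥0∞ :=
  (∫⁻ x in Ω, eAbs (u x) ^ p ∂μ) +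
    ⨅ (g : Y → ℝ≥0∞) (_ : IsUpperGradientOn D w Ω u g), ∫⁻ x in Ω, g x ^ p ∂μ

/-- The Sobolev capacity of `E`. -/
noncomputable def sobCap {Y : Type*} [MeasurableSpace Y] (D : Y → Y → ℝ) (p : ℝ)
    (μ : Measure Y) (w : Y → ℝ≥0∞) (E : Set Y) : ℝ≥0∞ :=
  ⨅ (u : Y → EReal) (_ : ∀ x ∈ E, 1 ≤ u x), NpNormP D p μ w Set.univ u

/-- The sphericalized arc length weight `ds̃ = ds/(1+d(x,a))²`. -/
noncomputable def hatW {X : Type*} [MetricSpace X] (a : X) : X → ℝ≥0∞ :=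
  fun x => ENNReal.ofReal ((1 + dist x a) ^ 2)⁻¹

/-- The sphericalization measure `dμ̂ₐ = dμ/(1+d(x,a))^{2p}`. -/
noncomputable def muHat {X : Type*} [MetricSpace X] [MeasurableSpace X] (μ : Measure X)
    (a : X) (p : ℝ) : Measure X :=
  μ.withDensity fun x => ENNReal.ofReal ((1 + dist x a) ^ (2 * p))⁻¹

/-- A `q`-Poincaré inequality for `(X,d,μ)`. -/
def PoincareIneqP {X : Type*} [MetricSpace X] [MeasurableSpace X] (q : ℝ) (μ : Measure X) : Prop :=
  ∃ C > (0:ℝ), ∃ lam ≥ (1:ℝ), ∀ (u : X → ℝ) (g : X → ℝ≥0∞), Measurable u → Measurable g →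
    MeasureTheory.LocallyIntegrable u μ →
    IsUpperGradientOn dist (fun _ => 1) Set.univ (fun x => (u x : EReal)) g →
    ∀ (x : X) (r : ℝ), 0 < r →
      ⨍⁻ y in Metric.ball x r, ENNReal.ofReal |u y - ⨍ z in Metric.ball x r, u z ∂μ| ∂μ ≤
        ENNReal.ofReal (C * Metric.diam (Metric.ball x r)) *
          (⨍⁻ y in Metric.ball x (lam * r), g y ^ q ∂μ) ^ (1/q)

/-- `μ` is doubling and all balls have positive finite measure. -/
def DoublingMeas {X : Type*} [MetricSpace X] [MeasurableSpace X] (μ : Measure X) : Prop :=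
  (∀ (x : X) (r : ℝ), 0 < r → 0 < μ (Metric.ball x r) ∧ μ (Metric.ball x r) < ⊤) ∧
    ∃ C > (0:ℝ), ∀ (x : X) (r : ℝ), 0 < r →
      μ (Metric.ball x (2 * r)) ≤ ENNReal.ofReal C * μ (Metric.ball x r)

/-- `μ` is Ahlfors `Q`-regular. -/
def AhlforsRegular {X : Type*} [MetricSpace X] [MeasurableSpace X] (μ : Measure X) (Q : ℝ) : Prop :=
  ∃ C > (0:ℝ), ∀ (x : X) (r : ℝ), 0 < r →
    ENNReal.ofReal (C⁻¹ * r ^ Q) ≤ μ (Metric.ball x r) ∧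
      μ (Metric.ball x r) ≤ ENNReal.ofReal (C * r ^ Q)

/-- The sphericalization quasimetric `d_a` on `Ẋ = X ∪ {∞}` (with `none = ∞`). -/
noncomputable def da {X : Type*} [MetricSpace X] (a : X) : Option X → Option X → ℝ
  | some x, some y => dist x y / ((1 + dist x a) * (1 + dist y a))
  | some x, none => (1 + dist x a)⁻¹
  | none, some y => (1 + dist y a)⁻¹
  | none, none => 0

/-- The sum `Σ d_a(x_j, x_{j-1})` along a finite chain. -/
noncomputable def chainSum {X : Type*} [MetricSpace X] (a : X) : List (Option X) → ℝ
  | x :: y :: l => da a x y + chainSum a (y :: l)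
  | _ => 0

/-- The sphericalization metric `d̂_a`: the infimum of `Σ d_a(x_j,x_{j-1})`
over all finite chains from `x` to `y` in `Ẋ`. -/
noncomputable def dhat {X : Type*} [MetricSpace X] (a : X) (x y : Option X) : ℝ :=
  sInf { s | ∃ l : List (Option X), (x :: l).getLast? = some y ∧ s = chainSum a (x :: l) }

/-!
The function `u ↦ d_a(u, ∞)` is `1`-Lipschitz for the quasimetric `d_a`, so no chain from `x` to
`∞` is shorter than the one-step chain, and `d̂_a(x, ∞) = 1 / (1 + d(x, a))`. Hence `B̂(∞, r)` is
the complement of a ball around `a` of radius about `t = 1 / r`. On the dyadic annulus where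
`1 + d(x, a) ≃ 2ʲ t` the density is `≃ (2ʲ t)^{-2p}` and Ahlfors regularity gives mass
`≲ (2ʲ t)^Q`, so `2p > Q` makes the sum a convergent geometric series `≲ t^{Q-2p}`. Conversely,
Ahlfors regularity forces every annulus `ρ ≤ d(·, a) < Sρ` to be nonempty, which puts a ball of
radius `t` inside `B̂(∞, r)` on which the density is `≃ t^{-2p}`.
-/

section Sphericalization

variable {X : Type*} [MetricSpace X] (a : X)

lemma da_none_sub_le_da (u v : Option X) : da a u none - da a v none ≤ da a u v := by
  rcases u with _ | x <;> rcases v with _ | y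
  · simp [da]
  · simp only [da]
    linarith [inv_nonneg.mpr (by positivity : (0 : ℝ) ≤ 1 + dist y a)]
  · simp [da]
  · simp only [da]
    rw [inv_sub_inv (by positivity) (by positivity)]
    gcongr
    linarith [dist_triangle y x a, dist_comm x y]

lemma da_none_sub_le_chainSum (l : List (Option X)) (u v : Option X)
    (h : (u :: l).getLast? = some v) : da a u none - da a v none ≤ chainSum a (u :: l) := by
  induction l generalizing u with
  | nil =>
    obtain rfl : u = v := by simpa using h
    simp [chainSum]
  | cons w l ih =>
    rw [List.getLast?_cons_cons] at h
    rw [chainSum]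
    linarith [ih w h, da_none_sub_le_da a u w]

lemma dhat_some_none (x : X) : dhat a (some x) none = (1 + dist x a)⁻¹ := by
  refine IsLeast.csInf_eq ⟨⟨[none], by simp, by simp [chainSum, da]⟩, ?_⟩
  rintro s ⟨l, hl, rfl⟩
  simpa [da] using da_none_sub_le_chainSum a l (some x) none hl

lemma setOf_dhat_some_none_lt {r : ℝ} (hr : 0 < r) :
    {x : X | dhat a (some x) none < r} = {x | r⁻¹ < 1 + dist x a} := by
  ext x
  change dhat a (some x) none < r ↔ r⁻¹ < 1 + dist x a
  rw [dhat_some_none]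
  exact inv_lt_comm₀ (by positivity) hr

end Sphericalization

lemma subset_iUnion_setOf_mem_Ico_two_pow {α : Type*} (f : α → ℝ) {t : ℝ} (ht : 0 < t) :
    {x | t < f x} ⊆ ⋃ j : ℕ, {x | f x ∈ Ico (2 ^ j * t) (2 * (2 ^ j * t))} := by
  intro x hx
  obtain ⟨j, hj, hj'⟩ := exists_nat_pow_near ((one_le_div ht).mpr (le_of_lt hx)) one_lt_two
  refine mem_iUnion.mpr ⟨j, (le_div_iff₀ ht).mp hj, ?_⟩
  rw [div_lt_iff₀ ht, pow_succ] at hj'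
  linarith

section MuHat

variable {X : Type*} [MetricSpace X] [MeasurableSpace X] {μ : Measure X} {a : X} {p c : ℝ}
  {s : Set X}

lemma muHat_le_of_le_one_add_dist (hs : MeasurableSet s) (hp : 0 ≤ p) (hc : 0 < c)
    (h : ∀ x ∈ s, c ≤ 1 + dist x a) :
    muHat μ a p s ≤ ENNReal.ofReal (c ^ (2 * p))⁻¹ * μ s := by
  rw [muHat, withDensity_apply _ hs, ← setLIntegral_const]
  refine setLIntegral_mono' hs fun x hx => ENNReal.ofReal_le_ofReal ?_
  gcongr
  exact h x hx

lemma le_muHat_of_one_add_dist_le (hs : MeasurableSet s) (hp : 0 ≤ p)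
    (h : ∀ x ∈ s, 1 + dist x a ≤ c) :
    ENNReal.ofReal (c ^ (2 * p))⁻¹ * μ s ≤ muHat μ a p s := by
  rw [muHat, withDensity_apply _ hs, ← setLIntegral_const]
  refine setLIntegral_mono' hs fun x hx => ENNReal.ofReal_le_ofReal ?_
  gcongr
  exact h x hx

lemma muHat_setOf_mem_Ico_le [OpensMeasurableSpace X] {Q C u : ℝ} (hp : 0 ≤ p) (hu : 0 < u)
    (hball : μ (ball a (2 * u)) ≤ ENNReal.ofReal (C * (2 * u) ^ Q)) :
    muHat μ a p {x | 1 + dist x a ∈ Ico u (2 * u)} ≤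
      ENNReal.ofReal (C * 2 ^ Q * u ^ (Q - 2 * p)) := by
  have hs : MeasurableSet {x | 1 + dist x a ∈ Ico u (2 * u)} :=
    measurableSet_Ico.preimage (by fun_prop)
  have hsub : {x | 1 + dist x a ∈ Ico u (2 * u)} ⊆ ball a (2 * u) := fun x hx => by
    rw [mem_ball]
    linarith [hx.2]
  calc muHat μ a p {x | 1 + dist x a ∈ Ico u (2 * u)}
      ≤ ENNReal.ofReal (u ^ (2 * p))⁻¹ * μ {x | 1 + dist x a ∈ Ico u (2 * u)} :=
        muHat_le_of_le_one_add_dist hs hp hu fun x hx => hx.1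
    _ ≤ ENNReal.ofReal (u ^ (2 * p))⁻¹ * ENNReal.ofReal (C * (2 * u) ^ Q) := by
        gcongr
        exact (measure_mono hsub).trans hball
    _ = ENNReal.ofReal (C * 2 ^ Q * u ^ (Q - 2 * p)) := by
        rw [← ENNReal.ofReal_mul (by positivity), Real.mul_rpow zero_le_two hu.le,
          Real.rpow_sub hu]
        ring_nf

end MuHat

namespace AhlforsRegular

variable {X : Type*} [MetricSpace X] [MeasurableSpace X] {μ : Measure X} {Q : ℝ}

theorem exists_dist_mem_Ico (hAR : AhlforsRegular μ Q) (hQ : 0 < Q) :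
    ∃ S > (0 : ℝ), ∀ (a : X) (ρ : ℝ), 0 < ρ → ∃ y, dist y a ∈ Ico ρ (S * ρ) := by
  obtain ⟨C, hC, hball⟩ := hAR
  have hSQ : ((2 * C ^ 2) ^ Q⁻¹) ^ Q = 2 * C ^ 2 := Real.rpow_inv_rpow (by positivity) hQ.ne'
  refine ⟨(2 * C ^ 2) ^ Q⁻¹, by positivity, fun a ρ hρ => ?_⟩
  by_contra! hgap
  have hsub : ball a ((2 * C ^ 2) ^ Q⁻¹ * ρ) ⊆ ball a ρ := fun x hx => by
    rw [mem_ball] at hx ⊢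
    by_contra! hxρ
    exact hgap x ⟨hxρ, hx⟩
  -- `(Sρ)^Q / C ≤ μ(B(a, Sρ)) ≤ μ(B(a, ρ)) ≤ C ρ^Q`, while `S^Q = 2C²`
  have key := ((hball a _ (by positivity)).1.trans (measure_mono hsub)).trans (hball a ρ hρ).2
  rw [ENNReal.ofReal_le_ofReal_iff (by positivity), Real.mul_rpow (by positivity) hρ.le,
    hSQ] at key
  have hρQ : 0 < ρ ^ Q := Real.rpow_pos_of_pos hρ Q
  have : C⁻¹ * (2 * C ^ 2 * ρ ^ Q) = 2 * (C * ρ ^ Q) := by field_simp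
  nlinarith

theorem le_muHat_setOf_lt [OpensMeasurableSpace X] (hAR : AhlforsRegular μ Q) (hQ : 0 < Q)
    {p : ℝ} (hp : 0 ≤ p) (a : X) :
    ∃ c > (0 : ℝ), ∀ t ≥ (1 : ℝ),
      ENNReal.ofReal (c * t ^ (Q - 2 * p)) ≤ muHat μ a p {x | t < 1 + dist x a} := by
  obtain ⟨S, hS, hann⟩ := hAR.exists_dist_mem_Ico hQ
  obtain ⟨C, hC, hball⟩ := hAR
  refine ⟨C⁻¹ * ((2 * S + 2) ^ (2 * p))⁻¹, by positivity, fun t ht => ?_⟩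
  have ht0 : 0 < t := by linarith
  obtain ⟨y, hy, hy'⟩ := hann a (2 * t) (by positivity)
  have hsub : ball y t ⊆ {x | t < 1 + dist x a} := fun x hx => by
    rw [mem_ball] at hx
    show t < 1 + dist x a
    linarith [dist_triangle y x a, dist_comm x y, dist_nonneg (x := x) (y := a)]
  have hnear : ∀ x ∈ ball y t, 1 + dist x a ≤ (2 * S + 2) * t := fun x hx => by
    rw [mem_ball] at hx
    nlinarith [dist_triangle x y a]
  calc ENNReal.ofReal (C⁻¹ * ((2 * S + 2) ^ (2 * p))⁻¹ * t ^ (Q - 2 * p))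
      = ENNReal.ofReal (((2 * S + 2) * t) ^ (2 * p))⁻¹ * ENNReal.ofReal (C⁻¹ * t ^ Q) := by
        rw [← ENNReal.ofReal_mul (by positivity), Real.mul_rpow (by positivity) ht0.le,
          Real.rpow_sub ht0]
        ring_nf
    _ ≤ ENNReal.ofReal (((2 * S + 2) * t) ^ (2 * p))⁻¹ * μ (ball y t) := by
        gcongr
        exact (hball y t ht0).1
    _ ≤ muHat μ a p (ball y t) := le_muHat_of_one_add_dist_le measurableSet_ball hp hnear
    _ ≤ muHat μ a p {x | t < 1 + dist x a} := measure_mono hsub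

theorem muHat_setOf_lt_le [OpensMeasurableSpace X] (hAR : AhlforsRegular μ Q) {p : ℝ}
    (hp : 0 ≤ p) (hQp : Q < 2 * p) (a : X) :
    ∃ C > (0 : ℝ), ∀ t > (0 : ℝ),
      muHat μ a p {x | t < 1 + dist x a} ≤ ENNReal.ofReal (C * t ^ (Q - 2 * p)) := by
  obtain ⟨C, hC, hball⟩ := hAR
  set θ : ℝ := 2 ^ (Q - 2 * p)
  have hθ : 0 < θ := by positivity
  have hθ1 : θ < 1 := Real.rpow_lt_one_of_one_lt_of_neg one_lt_two (by linarith)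
  refine ⟨C * 2 ^ Q * (1 - θ)⁻¹, by have := sub_pos.mpr hθ1; positivity, fun t ht => ?_⟩
  have hshell (j : ℕ) : muHat μ a p {x | 1 + dist x a ∈ Ico (2 ^ j * t) (2 * (2 ^ j * t))} ≤
      ENNReal.ofReal (C * 2 ^ Q * t ^ (Q - 2 * p) * θ ^ j) := by
    refine (muHat_setOf_mem_Ico_le hp (by positivity) (hball a _ (by positivity)).2).trans_eq ?_
    rw [Real.mul_rpow (by positivity) ht.le, ← Real.rpow_natCast, ← Real.rpow_mul zero_le_two,
      ← Real.rpow_natCast, ← Real.rpow_mul zero_le_two, mul_comm (j : ℝ)]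
    ring_nf
  calc muHat μ a p {x | t < 1 + dist x a}
      ≤ ∑' j : ℕ, muHat μ a p {x | 1 + dist x a ∈ Ico (2 ^ j * t) (2 * (2 ^ j * t))} :=
        (measure_mono (subset_iUnion_setOf_mem_Ico_two_pow _ ht)).trans (measure_iUnion_le _)
    _ ≤ ∑' j : ℕ, ENNReal.ofReal (C * 2 ^ Q * t ^ (Q - 2 * p) * θ ^ j) :=
        ENNReal.tsum_le_tsum hshell
    _ = ENNReal.ofReal (C * 2 ^ Q * (1 - θ)⁻¹ * t ^ (Q - 2 * p)) := by
        rw [← ENNReal.ofReal_tsum_of_nonneg (fun j => by positivity)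
          ((summable_geometric_of_lt_one hθ.le hθ1).mul_left _), tsum_mul_left,
          tsum_geometric_of_lt_one hθ.le hθ1]
        ring_nf

end AhlforsRegular

theorem muHat_ball_at_infinity_general {X : Type*} [MetricSpace X] [MeasurableSpace X]
    [BorelSpace X] (μ : Measure X)
    (Q : ℝ) (hQ : 1 < Q) (hAR : AhlforsRegular μ Q)
    (p : ℝ) (hp : Q / 2 < p) (a : X) :
    ∃ C > (0:ℝ), ∃ r₀ > (0:ℝ), ∀ r : ℝ, 0 < r → r < r₀ →
      ENNReal.ofReal (C⁻¹ * r ^ (2 * p - Q)) ≤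
          (muHat μ a p) {x : X | dhat a (some x) none < r} ∧
        (muHat μ a p) {x : X | dhat a (some x) none < r} ≤
          ENNReal.ofReal (C * r ^ (2 * p - Q)) := by
  have hp0 : 0 ≤ p := by linarith
  obtain ⟨c, hc, hlower⟩ := hAR.le_muHat_setOf_lt (by linarith) hp0 a
  obtain ⟨C, hC, hupper⟩ := hAR.muHat_setOf_lt_le hp0 (by linarith) a
  refine ⟨max C c⁻¹, lt_max_of_lt_left hC, 1, one_pos, fun r hr hr1 => ?_⟩
  have hrpow : r⁻¹ ^ (Q - 2 * p) = r ^ (2 * p - Q) := by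
    rw [Real.inv_rpow hr.le, ← Real.rpow_neg hr.le, neg_sub]
  rw [setOf_dhat_some_none_lt a hr, ← hrpow]
  constructor
  · refine le_trans (ENNReal.ofReal_le_ofReal ?_) (hlower _ (one_le_inv₀ hr |>.mpr hr1.le))
    gcongr
    exact inv_le_of_inv_le₀ hc (le_max_right _ _)
  · refine (hupper _ (inv_pos.mpr hr)).trans (ENNReal.ofReal_le_ofReal ?_)
    gcongr
    exact le_max_left _ _

/-- For a complete, unbounded, Ahlfors `Q`-regular space supporting a
Poincaré inequality, with `p > Q/2`, the sphericalized measure of small balls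
around `∞` satisfies `μ̂_a(B̂(∞,r)) ≃ r^{2p-Q}`. -/
theorem muHat_ball_at_infinity {X : Type*} [MetricSpace X] [MeasurableSpace X]
    [BorelSpace X] [CompleteSpace X] (μ : Measure X)
    (hunb : ¬ Bornology.IsBounded (Set.univ : Set X))
    (Q : ℝ) (hQ : 1 < Q) (hAR : AhlforsRegular μ Q)
    (hPI : ∃ q ≥ (1:ℝ), PoincareIneqP q μ)
    (p : ℝ) (hp : Q / 2 < p) (a : X) :
    ∃ C > (0:ℝ), ∃ r₀ > (0:ℝ), ∀ r : ℝ, 0 < r → r < r₀ →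
      ENNReal.ofReal (C⁻¹ * r ^ (2 * p - Q)) ≤
          (muHat μ a p) {x : X | dhat a (some x) none < r} ∧
        (muHat μ a p) {x : X | dhat a (some x) none < r} ≤
          ENNReal.ofReal (C * r ^ (2 * p - Q)) :=
  muHat_ball_at_infinity_general μ Q hQ hAR p hp a
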